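/- Let χ = 2ρ̌. For any subsets Π_{M₁}, Π_{M₂} ⊆ Π, one has τ(w₀(M₁), w₀(M₂)) = #(Π_{M₁} ∨ Π_{M₂}), the cardinality of the symmetric difference. In particular τ(w₀(M), 1) = #Π_M and τ(w₀(M), w₀) = #Π − #Π_M. -/

import Mathlib

open scoped InnerProductSpace

noncomputable section

/-- The reflection `s_α` in the hyperplane orthogonal to `α`. -/
def sRefl {V : Type*} [NormedAddCommGroup V] [InnerProductSpace ℝ V] [FiniteDimensional ℝ V]
    (α : V) : V ≃ₗᵢ[ℝ] V :=
  Submodule.reflection (ℝ ∙ α)ᗮ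

/-- `r_n(w) = {α ∈ Δ : ⟨α, χ⟩ = n and wα ∈ Δ⁺}`. -/
def rW {V : Type*} [NormedAddCommGroup V] [InnerProductSpace ℝ V]
    (Δ pos : Finset V) (χ : V) (n : ℤ) (w : V ≃ₗᵢ[ℝ] V) : Set V :=
  {α : V | α ∈ Δ ∧ ⟪α, χ⟫_ℝ = (n : ℝ) ∧ w α ∈ pos}

/-- `τ(w₁,w₂) = #(r₂(w₁) ∆ r₂(w₂)) − #(r₀(w₁) ∆ r₀(w₂))`. -/
def tau {V : Type*} [NormedAddCommGroup V] [InnerProductSpace ℝ V]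
    (Δ pos : Finset V) (χ : V) (w₁ w₂ : V ≃ₗᵢ[ℝ] V) : ℤ :=
  ((symmDiff (rW Δ pos χ 2 w₁) (rW Δ pos χ 2 w₂)).ncard : ℤ)
    - ((symmDiff (rW Δ pos χ 0 w₁) (rW Δ pos χ 0 w₂)).ncard : ℤ)

/-!
Pairing with `χ = 2ρ̌` computes twice the height. For a simple root `β`, the reflection `s_β`
permutes `Δ⁺ ∖ {β}` and negates `⟪β, ·⟫`, so the terms of `⟪β, χ⟫` other than `β̌` cancel and
`⟪β, χ⟫ = 2`; hence `⟪α, χ⟫ = 2 ht α`. So `r₀(w) = ∅` and `r₂(w) = {α ∈ Π | wα ∈ Δ⁺}` for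
every `w`, and `τ(w₁, w₂)` is the size of the symmetric difference of these sets. For `w₀(M)` the
set is `Π ∖ Π_M`: roots of `Π_M` become negative by definition, while for `α ∈ Π ∖ Π_M` the root
`w₀(M) α ∈ α + span Π_M` keeps the coefficient `1` at `α`. The elements `1` and `w₀` give `Π` and
`∅`, i.e. they behave like `w₀(M)` for `M = ∅` and `M = Π`.
-/

section Reflection

variable {V : Type*} [NormedAddCommGroup V] [InnerProductSpace ℝ V] [FiniteDimensional ℝ V]

lemma sRefl_apply (α x : V) : sRefl α x = x - (2 * ⟪α, x⟫_ℝ / ⟪α, α⟫_ℝ) • α := by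
  rw [sRefl, Submodule.reflection_orthogonal_apply, Submodule.reflection_apply,
    Submodule.starProjection_singleton, real_inner_self_eq_norm_sq, two_smul, neg_sub, ← add_smul]
  simp only [RCLike.ofReal_real_eq_id, id_eq]
  ring_nf

lemma sRefl_self (α : V) : sRefl α α = -α :=
  Submodule.reflection_orthogonalComplement_singleton_eq_neg α

lemma sRefl_sRefl (α x : V) : sRefl α (sRefl α x) = x :=
  Submodule.reflection_reflection _ x

lemma sRefl_inv (α : V) : (sRefl α)⁻¹ = sRefl α := by
  ext x
  simp only [LinearIsometryEquiv.coe_inv, sRefl, Submodule.reflection_symm]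

lemma inner_sRefl_eq_neg_inner (α x : V) : ⟪α, sRefl α x⟫_ℝ = -⟪α, x⟫_ℝ := by
  rw [← (sRefl α).inner_map_map, sRefl_sRefl, sRefl_self, inner_neg_left]

lemma sRefl_apply_sub_mem_span {S : Set V} {α : V} (hα : α ∈ S) (x : V) :
    sRefl α x - x ∈ Submodule.span ℝ S := by
  rw [sRefl_apply, sub_sub_cancel_left]
  exact Submodule.neg_mem _ (Submodule.smul_mem _ _ (Submodule.subset_span hα))

variable {S : Set V} {e : V ≃ₗᵢ[ℝ] V}

lemma apply_sub_mem_span_of_mem_closure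
    (he : e ∈ Subgroup.closure {e : V ≃ₗᵢ[ℝ] V | ∃ α ∈ S, e = sRefl α}) (x : V) :
    e x - x ∈ Submodule.span ℝ S := by
  induction he using Subgroup.closure_induction'' generalizing x with
  | mem _ h =>
    obtain ⟨α, hα, rfl⟩ := h
    exact sRefl_apply_sub_mem_span hα x
  | inv_mem _ h =>
    obtain ⟨α, hα, rfl⟩ := h
    rw [sRefl_inv]
    exact sRefl_apply_sub_mem_span hα x
  | one => simp
  | mul e f _ _ he hf =>
    simpa using Submodule.add_mem _ (he (f x)) (hf x)

lemma apply_mem_of_mem_closure {Δ : Set V} (hrefl : ∀ α ∈ S, ∀ β ∈ Δ, sRefl α β ∈ Δ)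
    (he : e ∈ Subgroup.closure {e : V ≃ₗᵢ[ℝ] V | ∃ α ∈ S, e = sRefl α}) :
    ∀ β ∈ Δ, e β ∈ Δ := by
  induction he using Subgroup.closure_induction'' with
  | mem _ h =>
    obtain ⟨α, hα, rfl⟩ := h
    exact hrefl α hα
  | inv_mem _ h =>
    obtain ⟨α, hα, rfl⟩ := h
    rw [sRefl_inv]
    exact hrefl α hα
  | one => simp
  | mul e f _ _ he hf => exact fun β hβ => he _ (hf β hβ)

end Reflection

structure IsSimpleSystem {V : Type*} [AddCommGroup V] [Module ℝ V] (Δ pos Pi : Finset V) :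
    Prop where
  pos_subset : pos ⊆ Δ
  mem_pos_iff : ∀ α ∈ Δ, (α ∈ pos ↔ -α ∉ pos)
  simple_subset : Pi ⊆ pos
  linearIndependent : LinearIndependent ℝ (fun β : (Pi : Set V) => (β : V))
  exists_nat_coeffs : ∀ α ∈ pos, ∃ c : V → ℕ, α = ∑ β ∈ Pi, (c β : ℝ) • β

namespace IsSimpleSystem

section Module

variable {V : Type*} [AddCommGroup V] [Module ℝ V] {Δ pos Pi : Finset V}
  (hS : IsSimpleSystem Δ pos Pi)
include hS

lemma zero_notMem_pos : (0 : V) ∉ pos := fun h =>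
  (hS.mem_pos_iff 0 (hS.pos_subset h)).mp h (by rwa [neg_zero])

lemma neg_mem_pos_of_notMem {α : V} (hα : α ∈ Δ) (h : α ∉ pos) : -α ∈ pos :=
  not_not.mp (mt (hS.mem_pos_iff α hα).mpr h)

lemma eq_zero_of_sum_smul_eq_zero {f : V → ℝ} (h : ∑ β ∈ Pi, f β • β = 0) :
    ∀ β ∈ Pi, f β = 0 :=
  (linearIndepOn_finset_iff (v := id)).mp hS.linearIndependent f h

/-- A root whose expansion in simple roots has a positive coefficient is positive. -/
lemma mem_pos_of_sub_mem_span {T : Finset V} (hT : T ⊆ Pi) {δ : V} (hδ : δ ∈ Pi) (hδT : δ ∉ T)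
    {a : ℝ} (ha : 0 < a) {γ : V} (hγ : γ ∈ Δ) (h : γ - a • δ ∈ Submodule.span ℝ (T : Set V)) :
    γ ∈ pos := by
  classical
  by_contra hγpos
  obtain ⟨d, hd⟩ := hS.exists_nat_coeffs _ (hS.neg_mem_pos_of_notMem hγ hγpos)
  obtain ⟨f, -, hf⟩ := Submodule.mem_span_finset.mp h
  have hsum : ∑ β ∈ Pi,
      ((d β : ℝ) + (if β ∈ T then f β else 0) + (if β = δ then a else 0)) • β = 0 := by
    simp only [add_smul, Finset.sum_add_distrib, ite_smul, zero_smul, Finset.sum_ite_mem,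
      Finset.inter_eq_right.mpr hT, Finset.sum_ite_eq', if_pos hδ, hf, ← hd]
    abel
  have := hS.eq_zero_of_sum_smul_eq_zero hsum δ hδ
  rw [if_neg hδT, if_pos rfl] at this
  linarith [(d δ).cast_nonneg (α := ℝ)]

lemma apply_notMem_pos {w : V → V} (hw : w '' (pos : Set V) = (fun x => -x) '' (pos : Set V))
    {α : V} (hα : α ∈ pos) : w α ∉ pos := by
  obtain ⟨p, hp, hpα⟩ := hw ▸ Set.mem_image_of_mem w hα
  rw [← hpα]
  exact (hS.mem_pos_iff p (hS.pos_subset hp)).mp hp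

lemma apply_mem_pos_iff {M : Finset V} (hM : M ⊆ Pi) {w : V → V} (hwΔ : ∀ α ∈ Δ, w α ∈ Δ)
    (hwM : ∀ x, w x - x ∈ Submodule.span ℝ (M : Set V)) (hneg : ∀ α ∈ M, -w α ∈ pos)
    {α : V} (hα : α ∈ Pi) : w α ∈ pos ↔ α ∉ M := by
  have hαΔ := hS.pos_subset (hS.simple_subset hα)
  refine ⟨fun hw hαM => (hS.mem_pos_iff _ (hwΔ α hαΔ)).mp hw (hneg α hαM), fun hαM => ?_⟩
  exact hS.mem_pos_of_sub_mem_span hM hα hαM one_pos (hwΔ α hαΔ) (by simpa using hwM α)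

end Module

section RootReflection

variable {V : Type*} [NormedAddCommGroup V] [InnerProductSpace ℝ V] [FiniteDimensional ℝ V]
  {Δ pos Pi : Finset V} (hS : IsSimpleSystem Δ pos Pi)
  (hred : ∀ α ∈ Δ, ∀ t : ℝ, t • α ∈ Δ → t = 1 ∨ t = -1)
  (hrefl : ∀ α ∈ Δ, ∀ β ∈ Δ, sRefl α β ∈ Δ)
include hS hred hrefl

lemma sRefl_mem_pos {β : V} (hβ : β ∈ Pi) {γ : V} (hγ : γ ∈ pos) (hne : γ ≠ β) :
    sRefl β γ ∈ pos := by
  classical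
  have hβΔ := hS.pos_subset (hS.simple_subset hβ)
  obtain ⟨c, hc⟩ := hS.exists_nat_coeffs γ hγ
  by_cases hmult : ∃ δ ∈ Pi, δ ≠ β ∧ c δ ≠ 0
  · -- `s_β` changes only the `β`-coefficient, so the positive `δ`-coefficient survives
    obtain ⟨δ, hδ, hδβ, hcδ⟩ := hmult
    refine hS.mem_pos_of_sub_mem_span (Finset.erase_subset δ Pi) hδ (Finset.notMem_erase δ Pi)
      (Nat.cast_pos.mpr (Nat.pos_of_ne_zero hcδ)) (hrefl β hβΔ γ (hS.pos_subset hγ)) ?_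
    have heq : sRefl β γ - (c δ : ℝ) • δ
        = ∑ x ∈ Pi.erase δ, (c x : ℝ) • x - (2 * ⟪β, γ⟫_ℝ / ⟪β, β⟫_ℝ) • β := by
      rw [sRefl_apply]
      nth_rewrite 1 [hc]
      rw [← Finset.add_sum_erase _ _ hδ]
      abel
    rw [heq]
    exact sub_mem (Submodule.sum_mem _ fun x hx => Submodule.smul_mem _ _ (Submodule.subset_span hx))
      (Submodule.smul_mem _ _ (Submodule.subset_span (Finset.mem_erase.mpr ⟨hδβ.symm, hβ⟩)))
  · push Not at hmult
    have hγβ : γ = (c β : ℝ) • β := by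
      rw [hc, Finset.sum_eq_single_of_mem β hβ]
      intro δ hδ hδβ
      rw [hmult δ hδ hδβ, Nat.cast_zero, zero_smul]
    rcases hred β hβΔ (c β) (hγβ ▸ hS.pos_subset hγ) with h1 | h1
    · exact (hne (by rw [hγβ, h1, one_smul])).elim
    · linarith [(c β).cast_nonneg (α := ℝ)]

lemma sRefl_mem_pos_erase [DecidableEq V] {β : V} (hβ : β ∈ Pi) {γ : V} (hγ : γ ∈ pos.erase β) :
    sRefl β γ ∈ pos.erase β := by
  obtain ⟨hγβ, hγ⟩ := Finset.mem_erase.mp hγ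
  refine Finset.mem_erase.mpr ⟨fun h => ?_, hS.sRefl_mem_pos hred hrefl hβ hγ hγβ⟩
  have hβpos := hS.simple_subset hβ
  have : γ = -β := by rw [← sRefl_sRefl β γ, h, sRefl_self]
  exact (hS.mem_pos_iff β (hS.pos_subset hβpos)).mp hβpos (this ▸ hγ)

lemma inner_eq_two_of_mem_simple {χ : V} (hχ : χ = ∑ γ ∈ pos, ((2 : ℝ) / ⟪γ, γ⟫_ℝ) • γ)
    {β : V} (hβ : β ∈ Pi) : ⟪β, χ⟫_ℝ = 2 := by
  classical
  have hβpos := hS.simple_subset hβ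
  have hββ : ⟪β, β⟫_ℝ ≠ 0 :=
    inner_self_ne_zero.mpr (ne_of_mem_of_not_mem hβpos hS.zero_notMem_pos)
  set f : V → ℝ := fun γ => 2 / ⟪γ, γ⟫_ℝ * ⟪β, γ⟫_ℝ with hf
  have hodd : ∑ γ ∈ pos.erase β, f γ = -∑ γ ∈ pos.erase β, f γ := by
    rw [← Finset.sum_neg_distrib]
    exact Finset.sum_nbij' (sRefl β) (sRefl β)
      (fun γ hγ => hS.sRefl_mem_pos_erase hred hrefl hβ hγ)
      (fun γ hγ => hS.sRefl_mem_pos_erase hred hrefl hβ hγ)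
      (fun γ _ => sRefl_sRefl β γ) (fun γ _ => sRefl_sRefl β γ)
      (fun γ _ => by simp only [hf, (sRefl β).inner_map_map, inner_sRefl_eq_neg_inner]; ring)
  have hsplit : ⟪β, χ⟫_ℝ = f β + ∑ γ ∈ pos.erase β, f γ := by
    rw [Finset.add_sum_erase _ _ hβpos, hχ, inner_sum]
    simp only [hf, real_inner_smul_right]
  have hfβ : f β = 2 := div_mul_cancel₀ _ hββ
  linarith

end RootReflection

section InnerProduct

variable {V : Type*} [NormedAddCommGroup V] [InnerProductSpace ℝ V] {Pi : Finset V} {χ : V}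
  (hχ : ∀ β ∈ Pi, ⟪β, χ⟫_ℝ = 2)
include hχ

lemma inner_sum_eq_two_mul_sum (c : V → ℕ) :
    ⟪∑ β ∈ Pi, (c β : ℝ) • β, χ⟫_ℝ = 2 * ∑ β ∈ Pi, c β := by
  rw [sum_inner, Nat.cast_sum, Finset.mul_sum]
  exact Finset.sum_congr rfl fun β hβ => by rw [real_inner_smul_left, hχ β hβ, mul_comm]

variable {Δ pos : Finset V} (hS : IsSimpleSystem Δ pos Pi)
include hS

lemma two_le_inner {α : V} (hα : α ∈ pos) : 2 ≤ ⟪α, χ⟫_ℝ := by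
  obtain ⟨c, rfl⟩ := hS.exists_nat_coeffs α hα
  have hne : ∑ β ∈ Pi, c β ≠ 0 := fun h => hS.zero_notMem_pos <| by
    rwa [Finset.sum_eq_zero fun β hβ => by
      rw [Finset.sum_eq_zero_iff.mp h β hβ, Nat.cast_zero, zero_smul]] at hα
  have : (1 : ℝ) ≤ ∑ β ∈ Pi, c β := by exact_mod_cast Nat.one_le_iff_ne_zero.mpr hne
  rw [inner_sum_eq_two_mul_sum hχ]
  linarith

lemma mem_simple_of_inner_eq_two {α : V} (hα : α ∈ pos) (h : ⟪α, χ⟫_ℝ = 2) : α ∈ Pi := by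
  classical
  obtain ⟨c, rfl⟩ := hS.exists_nat_coeffs α hα
  have hsum : ∑ β ∈ Pi, c β = 1 := by
    rw [inner_sum_eq_two_mul_sum hχ] at h
    exact_mod_cast (by linarith : ((∑ β ∈ Pi, c β : ℕ) : ℝ) = 1)
  obtain ⟨δ, hδ, hcδ⟩ := Finset.exists_ne_zero_of_sum_ne_zero (hsum ▸ one_ne_zero)
  have hsplit := Finset.add_sum_erase Pi c hδ
  have hrest : ∀ β ∈ Pi, β ≠ δ → c β = 0 := fun β hβ hβδ =>
    Finset.sum_eq_zero_iff.mp (by omega) β (Finset.mem_erase.mpr ⟨hβδ, hβ⟩)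
  rwa [Finset.sum_eq_single_of_mem δ hδ fun β hβ hβδ => by
    rw [hrest β hβ hβδ, Nat.cast_zero, zero_smul], show c δ = 1 by omega, Nat.cast_one, one_smul]

lemma rW_zero_eq_empty (w : V ≃ₗᵢ[ℝ] V) : rW Δ pos χ 0 w = ∅ := by
  refine Set.eq_empty_of_forall_notMem fun α ⟨hαΔ, h0, _⟩ => ?_
  push_cast at h0
  by_cases hα : α ∈ pos
  · linarith [hS.two_le_inner hχ hα]
  · have := hS.two_le_inner hχ (hS.neg_mem_pos_of_notMem hαΔ hα)
    rw [inner_neg_left] at this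
    linarith

lemma rW_two_eq (w : V ≃ₗᵢ[ℝ] V) : rW Δ pos χ 2 w = {α ∈ (Pi : Set V) | w α ∈ pos} := by
  ext α
  refine ⟨fun ⟨hαΔ, h2, hw⟩ => ⟨?_, hw⟩, fun ⟨hα, hw⟩ =>
    ⟨hS.pos_subset (hS.simple_subset hα), by rw [hχ α hα]; norm_num, hw⟩⟩
  push_cast at h2
  by_cases hα : α ∈ pos
  · exact hS.mem_simple_of_inner_eq_two hχ hα h2
  · have := hS.two_le_inner hχ (hS.neg_mem_pos_of_notMem hαΔ hα)
    rw [inner_neg_left] at this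
    linarith

lemma tau_eq_ncard_symmDiff {M₁ M₂ : Finset V} (hM₁ : M₁ ⊆ Pi) (hM₂ : M₂ ⊆ Pi)
    {w₁ w₂ : V ≃ₗᵢ[ℝ] V} (h₁ : ∀ α ∈ Pi, w₁ α ∈ pos ↔ α ∉ M₁)
    (h₂ : ∀ α ∈ Pi, w₂ α ∈ pos ↔ α ∉ M₂) :
    tau Δ pos χ w₁ w₂ = ((symmDiff (M₁ : Set V) M₂).ncard : ℤ) := by
  have hsdiff : ∀ w M, (∀ α ∈ Pi, w α ∈ pos ↔ α ∉ M) →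
      rW Δ pos χ 2 w = (Pi : Set V) \ M := fun w M h => by
    rw [hS.rW_two_eq hχ]
    ext α
    exact ⟨fun ⟨hα, hw⟩ => ⟨hα, (h α hα).mp hw⟩, fun ⟨hα, hM⟩ => ⟨hα, (h α hα).mpr hM⟩⟩
  have hsymm : symmDiff ((Pi : Set V) \ M₁) ((Pi : Set V) \ M₂) = symmDiff (M₁ : Set V) M₂ := by
    ext α
    have := @hM₁ α
    have := @hM₂ α
    simp only [Set.mem_symmDiff, Set.mem_sdiff, Finset.mem_coe]
    tauto
  rw [tau, hS.rW_zero_eq_empty hχ, hS.rW_zero_eq_empty hχ, symmDiff_self, hsdiff w₁ M₁ h₁,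
    hsdiff w₂ M₂ h₂, hsymm]
  simp

end InnerProduct

end IsSimpleSystem

theorem stmt9_general
    {V : Type*} [NormedAddCommGroup V] [InnerProductSpace ℝ V] [FiniteDimensional ℝ V]
    (Δ pos Pi : Finset V) (χ : V)
    -- root system axioms: finite (a `Finset`), spanning, reduced, crystallographic,
    -- stable under negation and under the reflections `s_α`
    (hred : ∀ α ∈ Δ, ∀ t : ℝ, t • α ∈ Δ → t = 1 ∨ t = -1)
    (hrefl : ∀ α ∈ Δ, ∀ β ∈ Δ, sRefl α β ∈ Δ)
    -- positive roots and simple roots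
    (hposΔ : pos ⊆ Δ)
    (hpart : ∀ α ∈ Δ, (α ∈ pos ↔ -α ∉ pos))
    (hPipos : Pi ⊆ pos)
    (hindep : LinearIndependent ℝ (fun β : (Pi : Set V) => (β : V)))
    (hcomb : ∀ α ∈ pos, ∃ c : V → ℕ, α = ∑ β ∈ Pi, (c β : ℝ) • β)
    -- the longest element `w₀`, with `w₀ (Δ⁺) = −Δ⁺`
    (w0 : V ≃ₗᵢ[ℝ] V)
    (hw0pos : (fun x => w0 x) '' (pos : Set V) = (fun x => -x) '' (pos : Set V))
    -- `χ = 2ρ̌` is the sum of the positive coroots `β̌ = 2β/(β,β)`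
    (hchi : χ = ∑ β ∈ pos, ((2 : ℝ) / ⟪β, β⟫_ℝ) • β)
    -- for each `Π_M ⊆ Π`, `w₀(M)` is the element of the subgroup `W_M` generated by
    -- the reflections in `Π_M` mapping every positive root in `Δ ∩ span Π_M` to a
    -- negative root
    (w0M : Finset V → (V ≃ₗᵢ[ℝ] V))
    (hw0MW : ∀ M, M ⊆ Pi →
      w0M M ∈ Subgroup.closure {e : V ≃ₗᵢ[ℝ] V | ∃ α ∈ M, e = sRefl α})
    (hw0Mneg : ∀ M, M ⊆ Pi → ∀ α ∈ Δ,
      α ∈ Submodule.span ℝ (M : Set V) → α ∈ pos → -(w0M M α) ∈ pos) :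
    ∀ M₁, M₁ ⊆ Pi → ∀ M₂, M₂ ⊆ Pi →
      tau Δ pos χ (w0M M₁) (w0M M₂)
        = ((symmDiff (M₁ : Set V) (M₂ : Set V)).ncard : ℤ) ∧
      tau Δ pos χ (w0M M₁) 1 = (M₁.card : ℤ) ∧
      tau Δ pos χ (w0M M₁) w0 = (Pi.card : ℤ) - (M₁.card : ℤ) := by
  classical
  intro M₁ hM₁ M₂ hM₂
  have hS : IsSimpleSystem Δ pos Pi := ⟨hposΔ, hpart, hPipos, hindep, hcomb⟩
  have hχ : ∀ β ∈ Pi, ⟪β, χ⟫_ℝ = 2 := fun β hβ => hS.inner_eq_two_of_mem_simple hred hrefl hchi hβ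
  have hw0M : ∀ M ⊆ Pi, ∀ α ∈ Pi, w0M M α ∈ pos ↔ α ∉ M := fun M hM α hα =>
    hS.apply_mem_pos_iff hM
      (apply_mem_of_mem_closure (fun β hβ => hrefl β (hposΔ (hPipos (hM hβ)))) (hw0MW M hM))
      (apply_sub_mem_span_of_mem_closure (hw0MW M hM))
      (fun β hβ => hw0Mneg M hM β (hposΔ (hPipos (hM hβ))) (Submodule.subset_span hβ)
        (hPipos (hM hβ))) hα
  have hone : ∀ α ∈ Pi, (1 : V ≃ₗᵢ[ℝ] V) α ∈ pos ↔ α ∉ (∅ : Finset V) := fun α hα =>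
    iff_of_true (hPipos hα) (Finset.notMem_empty α)
  have hw0 : ∀ α ∈ Pi, w0 α ∈ pos ↔ α ∉ Pi := fun α hα =>
    iff_of_false (hS.apply_notMem_pos hw0pos (hPipos hα)) (not_not.mpr hα)
  refine ⟨hS.tau_eq_ncard_symmDiff hχ hM₁ hM₂ (hw0M M₁ hM₁) (hw0M M₂ hM₂), ?_, ?_⟩
  · rw [hS.tau_eq_ncard_symmDiff hχ hM₁ (Finset.empty_subset Pi) (hw0M M₁ hM₁) hone]
    rw [← Finset.coe_symmDiff, Set.ncard_coe_finset, Finset.bot_eq_empty.symm, symmDiff_bot]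
  · rw [hS.tau_eq_ncard_symmDiff hχ hM₁ subset_rfl (hw0M M₁ hM₁) hw0, ← Finset.coe_symmDiff,
      Set.ncard_coe_finset, symmDiff_of_le hM₁, Finset.card_sdiff_of_subset hM₁,
      Nat.cast_sub (Finset.card_le_card hM₁)]

theorem stmt9
    {V : Type*} [NormedAddCommGroup V] [InnerProductSpace ℝ V] [FiniteDimensional ℝ V]
    (Δ pos Pi : Finset V) (χ : V)
    -- root system axioms: finite (a `Finset`), spanning, reduced, crystallographic,
    -- stable under negation and under the reflections `s_α`
    (hspan : Submodule.span ℝ (Δ : Set V) = ⊤)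
    (hzero : (0 : V) ∉ Δ)
    (hsym : ∀ α ∈ Δ, -α ∈ Δ)
    (hred : ∀ α ∈ Δ, ∀ t : ℝ, t • α ∈ Δ → t = 1 ∨ t = -1)
    (hcrys : ∀ α ∈ Δ, ∀ β ∈ Δ, ∃ n : ℤ, 2 * ⟪β, α⟫_ℝ / ⟪α, α⟫_ℝ = (n : ℝ))
    (hrefl : ∀ α ∈ Δ, ∀ β ∈ Δ, sRefl α β ∈ Δ)
    -- positive roots and simple roots
    (hposΔ : pos ⊆ Δ)
    (hpart : ∀ α ∈ Δ, (α ∈ pos ↔ -α ∉ pos))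
    (hPipos : Pi ⊆ pos)
    (hindep : LinearIndependent ℝ (fun β : (Pi : Set V) => (β : V)))
    (hcomb : ∀ α ∈ pos, ∃ c : V → ℕ, α = ∑ β ∈ Pi, (c β : ℝ) • β)
    -- the Weyl group, generated by the reflections in the roots
    (W : Subgroup (V ≃ₗᵢ[ℝ] V))
    (hW : W = Subgroup.closure {e : V ≃ₗᵢ[ℝ] V | ∃ α ∈ Δ, e = sRefl α})
    -- the longest element `w₀`, with `w₀ (Δ⁺) = −Δ⁺`
    (w0 : V ≃ₗᵢ[ℝ] V) (hw0W : w0 ∈ W)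
    (hw0pos : (fun x => w0 x) '' (pos : Set V) = (fun x => -x) '' (pos : Set V))
    -- `χ = 2ρ̌` is the sum of the positive coroots `β̌ = 2β/(β,β)`
    (hchi : χ = ∑ β ∈ pos, ((2 : ℝ) / ⟪β, β⟫_ℝ) • β)
    -- for each `Π_M ⊆ Π`, `w₀(M)` is the element of the subgroup `W_M` generated by
    -- the reflections in `Π_M` mapping every positive root in `Δ ∩ span Π_M` to a
    -- negative root
    (w0M : Finset V → (V ≃ₗᵢ[ℝ] V))
    (hw0MW : ∀ M, M ⊆ Pi →
      w0M M ∈ Subgroup.closure {e : V ≃ₗᵢ[ℝ] V | ∃ α ∈ M, e = sRefl α})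
    (hw0Mneg : ∀ M, M ⊆ Pi → ∀ α ∈ Δ,
      α ∈ Submodule.span ℝ (M : Set V) → α ∈ pos → -(w0M M α) ∈ pos) :
    ∀ M₁, M₁ ⊆ Pi → ∀ M₂, M₂ ⊆ Pi →
      tau Δ pos χ (w0M M₁) (w0M M₂)
        = ((symmDiff (M₁ : Set V) (M₂ : Set V)).ncard : ℤ) ∧
      tau Δ pos χ (w0M M₁) 1 = (M₁.card : ℤ) ∧
      tau Δ pos χ (w0M M₁) w0 = (Pi.card : ℤ) - (M₁.card : ℤ) :=
  stmt9_general Δ pos Pi χ hred hrefl hposΔ hpart hPipos hindep hcomb w0 hw0pos hchi w0M hw0MW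
    hw0Mneg
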